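/- Let X = μ(R) be a supreme set in G and K ⊆ V with K ⊆ X or K ∩ X = ∅. In the graph H obtained by contracting K to a single node, the image X' of X is a supreme set of H with respect to the image of T. -/

import Mathlib

variable {V : Type*} {W : Type*}

def IsSteinerCut {α : Type*} (T X : Set α) : Prop := (X ∩ T).Nonempty ∧ ¬ T ⊆ X

def SteinerExtreme {α : Type*} (d : Set α → ℝ) (T X : Set α) : Prop :=
  IsSteinerCut T X ∧ ∀ Y, IsSteinerCut T Y → Y ⊂ X → d X < d Y

def Crosses {α : Type*} (X Y : Set α) : Prop :=
  (X ∩ Y).Nonempty ∧ (X \ Y).Nonempty ∧ (Y \ X).Nonempty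

/-- `X` is a supreme set: it is extreme and contains every extreme set with the
same projection on terminals, i.e. `X = μ(X ∩ T)`. -/
def IsSupreme {α : Type*} (d : Set α → ℝ) (T X : Set α) : Prop :=
  SteinerExtreme d T X ∧ ∀ Y, SteinerExtreme d T Y → Y ∩ T = X ∩ T → Y ⊆ X

/-- Contracting a set `K` that is contained in, or disjoint from, a supreme set
`X = μ(R)` keeps the image of `X` a supreme set of the contracted graph `H`
(with terminal set the image of `T`). Here `φ` is the contraction map,
identifying exactly the vertices of `K`, and `dH Z = d (φ ⁻¹' Z)`. -/
theorem supreme_contract [Fintype V] (d : Set V → ℝ) (T K X : Set V)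
    (φ : V → W) (dH : Set W → ℝ)
    (hφsurj : Function.Surjective φ)
    (hφ : ∀ a b : V, φ a = φ b ↔ (a = b ∨ (a ∈ K ∧ b ∈ K)))
    (hdH : ∀ Z : Set W, dH Z = d (φ ⁻¹' Z))
    (hsub : ∀ A B : Set V, d (A ∩ B) + d (A ∪ B) ≤ d A + d B)
    (hpos : ∀ A B : Set V, d (A \ B) + d (B \ A) ≤ d A + d B)
    (h4 : ∀ A B : Set V, Crosses A B → max (d A) (d B) < d (A ∩ B) →
      d (A ∪ B) < min (d A) (d B))
    (hK : K ⊆ X ∨ Disjoint K X)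
    (hX : IsSupreme d T X) :
    IsSupreme dH (φ '' T) (φ '' X) := by
  classical
  obtain ⟨⟨hXsc, hXmin⟩, hXsup⟩ := hX
  -- saturation lemma
  have satur : ∀ A : Set V, (K ⊆ A ∨ Disjoint K A) → φ ⁻¹' (φ '' A) = A := by
    intro A hA
    apply Set.Subset.antisymm
    · rintro v ⟨a, ha, hav⟩
      rcases (hφ a v).mp hav with h | ⟨haK, hvK⟩
      · rwa [← h]
      · rcases hA with h1 | h1
        · exact h1 hvK
        · exact absurd ha (Set.disjoint_left.mp h1 haK)
    · exact Set.subset_preimage_image φ A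
  have hXsat : φ ⁻¹' (φ '' X) = X := satur X hK
  have hdX : dH (φ '' X) = d X := by rw [hdH, hXsat]
  constructor
  · -- the image of X is extreme in H
    refine ⟨⟨?_, ?_⟩, ?_⟩
    · obtain ⟨x, hxX, hxT⟩ := hXsc.1
      exact ⟨φ x, ⟨x, hxX, rfl⟩, ⟨x, hxT, rfl⟩⟩
    · intro h
      apply hXsc.2
      intro t ht
      have : φ t ∈ φ '' X := h ⟨t, ht, rfl⟩
      rwa [← hXsat]
    · intro Z' hZ'sc hss
      rw [hdX, hdH]
      apply hXmin
      · constructor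
        · obtain ⟨w, hwZ, t, htT, hwt⟩ := hZ'sc.1
          exact ⟨t, by rw [Set.mem_preimage, hwt]; exact hwZ, htT⟩
        · intro h
          apply hZ'sc.2
          rintro w ⟨t, htT, rfl⟩
          exact h htT
      · constructor
        · intro v hv
          have : v ∈ φ ⁻¹' (φ '' X) := hss.1 hv
          rwa [hXsat] at this
        · intro h
          rcases Set.not_subset.mp hss.2 with ⟨w, hwX, hwZ'⟩
          obtain ⟨x, hxX, rfl⟩ := hwX
          exact hwZ' (h hxX)
  · -- supremacy of the image of X in H
    intro Z hZext hproj
    obtain ⟨hZsc, hZmin⟩ := hZext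
    set Y : Set V := φ ⁻¹' Z with hYdef
    have hZimg : φ '' Y = Z := Set.image_preimage_eq Z hφsurj
    -- reduce to Y ⊆ X
    suffices hYX : Y ⊆ X by
      rw [← hZimg]
      exact Set.image_mono hYX
    by_contra hYX
    -- K is inside or outside Y
    have hKY : K ⊆ Y ∨ Disjoint K Y := by
      by_cases h : (K ∩ Y).Nonempty
      · left
        obtain ⟨k, hkK, hkY⟩ := h
        intro k' hk'
        have : φ k' = φ k := (hφ k' k).mpr (Or.inr ⟨hk', hkK⟩)
        show φ k' ∈ Z
        rw [this]; exact hkY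
      · right
        exact Set.disjoint_iff_inter_eq_empty.mpr (Set.not_nonempty_iff_eq_empty.mp h)
    have hYsat : φ ⁻¹' (φ '' Y) = Y := by rw [hZimg]
    -- projections coincide
    have hTproj : Y ∩ T = X ∩ T := by
      ext t
      constructor
      · rintro ⟨htY, htT⟩
        have h1 : φ t ∈ Z ∩ φ '' T := ⟨htY, ⟨t, htT, rfl⟩⟩
        rw [hproj] at h1
        have : t ∈ φ ⁻¹' (φ '' X) := h1.1
        rw [hXsat] at this
        exact ⟨this, htT⟩
      · rintro ⟨htX, htT⟩
        have h1 : φ t ∈ φ '' X ∩ φ '' T := ⟨⟨t, htX, rfl⟩, ⟨t, htT, rfl⟩⟩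
        rw [← hproj] at h1
        exact ⟨h1.1, htT⟩
    -- a terminal outside Y and X
    obtain ⟨t₀, ht₀T, ht₀Y, ht₀X⟩ : ∃ t, t ∈ T ∧ t ∉ Y ∧ t ∉ X := by
      rcases Set.not_subset.mp hZsc.2 with ⟨w, hwT, hwZ⟩
      obtain ⟨t, htT, rfl⟩ := hwT
      refine ⟨t, htT, hwZ, fun htX => ?_⟩
      have : t ∈ Y ∩ T := by rw [hTproj]; exact ⟨htX, htT⟩
      exact hwZ this.1
    -- quasi-extremality of Y over saturated sets
    have quasi : ∀ A : Set V, φ ⁻¹' (φ '' A) = A → IsSteinerCut T A → A ⊂ Y → d Y < d A := by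
      intro A hAsat hAsc hAY
      have h1 : IsSteinerCut (φ '' T) (φ '' A) := by
        constructor
        · obtain ⟨a, haA, haT⟩ := hAsc.1
          exact ⟨φ a, ⟨a, haA, rfl⟩, ⟨a, haT, rfl⟩⟩
        · intro h
          apply hAsc.2
          intro t ht
          have : φ t ∈ φ '' A := h ⟨t, ht, rfl⟩
          rwa [← hAsat]
      have h2 : φ '' A ⊂ Z := by
        constructor
        · rw [← hZimg]; exact Set.image_mono hAY.1
        · intro h
          rcases Set.not_subset.mp hAY.2 with ⟨y, hyY, hyA⟩
          have : φ y ∈ φ '' A := h hyY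
          rw [← hAsat] at hyA
          exact hyA this
      have := hZmin (φ '' A) h1 h2
      rwa [hdH, hdH, hAsat] at this
    set U : Set V := X ∪ Y with hUdef
    have hUT : U ∩ T = X ∩ T := by
      rw [hUdef, Set.union_inter_distrib_right, hTproj, Set.union_self]
    have ht₀U : t₀ ∉ U := fun h => h.elim ht₀X ht₀Y
    have hUsc : IsSteinerCut T U := by
      constructor
      · obtain ⟨x, hxX, hxT⟩ := hXsc.1
        exact ⟨x, Or.inl hxX, hxT⟩
      · exact fun h => ht₀U (h ht₀T)
    -- key inequality : d U < d X
    have key : d U < d X := by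
      by_cases hXY : X ⊆ Y
      · have hXY' : X ⊂ Y := ⟨hXY, fun h => hYX h⟩
        have hU : U = Y := Set.union_eq_self_of_subset_left hXY
        rw [hU]
        exact quasi X hXsat hXsc hXY'
      · -- crossing case
        have hIsat : φ ⁻¹' (φ '' (X ∩ Y)) = X ∩ Y := by
          apply satur
          rcases hK with hK1 | hK1
          · rcases hKY with hK2 | hK2
            · exact Or.inl (Set.subset_inter hK1 hK2)
            · exact Or.inr (hK2.mono_right Set.inter_subset_right)
          · exact Or.inr (hK1.mono_right Set.inter_subset_left)
        have hRsub : X ∩ T ⊆ X ∩ Y := by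
          rintro r ⟨hrX, hrT⟩
          have : r ∈ Y ∩ T := by rw [hTproj]; exact ⟨hrX, hrT⟩
          exact ⟨hrX, this.1⟩
        have hIsc : IsSteinerCut T (X ∩ Y) := by
          constructor
          · obtain ⟨r, hrXT⟩ := hXsc.1
            exact ⟨r, hRsub hrXT, hrXT.2⟩
          · exact fun h => hXsc.2 (h.trans Set.inter_subset_left)
        have h1 : d X < d (X ∩ Y) := by
          apply hXmin _ hIsc
          exact ⟨Set.inter_subset_left, fun h => hXY (fun x hx => (h hx).2)⟩
        have h2 : d Y < d (X ∩ Y) := by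
          apply quasi _ hIsat hIsc
          exact ⟨Set.inter_subset_right, fun h => hYX (fun y hy => (h hy).1)⟩
        have hcross : Crosses X Y := by
          refine ⟨?_, ?_, ?_⟩
          · obtain ⟨r, hrXT⟩ := hXsc.1
            exact ⟨r, hRsub hrXT⟩
          · rcases Set.not_subset.mp hXY with ⟨x, hx1, hx2⟩
            exact ⟨x, hx1, hx2⟩
          · rcases Set.not_subset.mp hYX with ⟨y, hy1, hy2⟩
            exact ⟨y, hy1, hy2⟩
        have := h4 X Y hcross (max_lt h1 h2)
        calc d U < min (d X) (d Y) := this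
          _ ≤ d X := min_le_left _ _
    -- minimization: find an extreme set with projection X ∩ T containing X
    set F : Set (Set V) := {S | IsSteinerCut T S ∧ X ⊆ S ∧ S ⊆ U ∧ d S ≤ d U} with hFdef
    have hUF : U ∈ F := ⟨hUsc, Set.subset_union_left, subset_rfl, le_rfl⟩
    obtain ⟨S₀, hS₀F, hS₀min⟩ := Set.exists_min_image F d (Set.toFinite F) ⟨U, hUF⟩
    set F' : Set (Set V) := {S | S ∈ F ∧ d S ≤ d S₀} with hF'def
    obtain ⟨S, hSF', hSmin⟩ := Set.exists_min_image F' Set.ncard (Set.toFinite F')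
      ⟨S₀, hS₀F, le_rfl⟩
    obtain ⟨hSF, hSd⟩ := hSF'
    have m1 : ∀ S' ∈ F, d S ≤ d S' := fun S' h => le_trans hSd (hS₀min S' h)
    have m2 : ∀ S' ∈ F, d S' ≤ d S → S.ncard ≤ S'.ncard := by
      intro S' h1 h2
      exact hSmin S' ⟨h1, le_trans h2 hSd⟩
    obtain ⟨hSsc, hXS, hSU, hSdU⟩ := hSF
    have hSext : SteinerExtreme d T S := by
      refine ⟨hSsc, ?_⟩
      intro S' hS'sc hss
      by_contra hlt
      push_neg at hlt
      by_cases hXS' : X ⊆ S'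
      · have hS'F : S' ∈ F := ⟨hS'sc, hXS', hss.1.trans hSU, le_trans hlt hSdU⟩
        have := m2 S' hS'F hlt
        have hcard := Set.ncard_lt_ncard hss (Set.toFinite S)
        omega
      · have hsc2 : IsSteinerCut T (S' ∩ X) := by
          constructor
          · obtain ⟨s, hsS', hsT⟩ := hS'sc.1
            have hsU : s ∈ U ∩ T := ⟨hSU (hss.1 hsS'), hsT⟩
            rw [hUT] at hsU
            exact ⟨s, ⟨hsS', hsU.1⟩, hsT⟩
          · exact fun h => hXsc.2 (h.trans Set.inter_subset_right)
        have hssX : S' ∩ X ⊂ X :=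
          ⟨Set.inter_subset_right, fun h => hXS' (fun x hx => (h hx).1)⟩
        have h1 : d X < d (S' ∩ X) := hXmin _ hsc2 hssX
        have h2 : d (S' ∪ X) < d S' := by
          have := hsub S' X
          linarith
        have hS''F : S' ∪ X ∈ F := by
          refine ⟨⟨?_, ?_⟩, Set.subset_union_right, ?_, ?_⟩
          · obtain ⟨r, hrX, hrT⟩ := hXsc.1
            exact ⟨r, Or.inr hrX, hrT⟩
          · intro h
            exact (h ht₀T).elim (fun hc => ht₀U (hSU (hss.1 hc))) ht₀X
          · exact Set.union_subset (hss.1.trans hSU) (hXS.trans hSU)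
          · linarith [hSdU, hlt]
        have := m1 _ hS''F
        linarith
    have hSproj : S ∩ T = X ∩ T := by
      apply Set.Subset.antisymm
      · rw [← hUT]
        exact Set.inter_subset_inter_left T hSU
      · exact fun r hr => ⟨hXS hr.1, hr.2⟩
    have hSsubX : S ⊆ X := hXsup S hSext hSproj
    have hSeqX : S = X := Set.Subset.antisymm hSsubX hXS
    rw [hSeqX] at hSdU
    linarith
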